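/- arXiv:quant-ph/9904079 — 5 statements merged into one kernel-verified Lean document; each statement's English description precedes it below -/
import Mathlib

section
/- Let P be a nonzero multilinear polynomial over ℝ in N variables (every variable occurs with degree at most 1 in P) of total degree at most d. Then the number of points X ∈ {0,1}^N with P(X) ≠ 0 is at least 2^{N−d}; equivalently, the fraction of Boolean inputs on which P is nonzero is at least 2^{−d}. -/
/-!
Induct on the number of variables. Multilinearity in the first variable gives `P = A + x₀ B` with
`A, B` multilinear in the remaining ones. If `B = 0`, each nonzero Boolean point of `A` extends to a
nonzero point of `P` in both ways, doubling the count. Otherwise `deg B < deg P`, and each nonzero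
point `y` of `B` extends injectively to a nonzero point of `P`: take `x₀ = 1` exactly when `A(y) = 0`.
-/

namespace MvPolynomial

variable {R : Type*} [CommSemiring R]

def boolVec {σ : Type*} (x : σ → Bool) : σ → R := fun i => if x i then 1 else 0

def nonzeroBoolPoints {σ : Type*} (P : MvPolynomial σ R) : Set (σ → Bool) :=
  {x | eval (boolVec x) P ≠ 0}

lemma boolVec_cons {n : ℕ} (b : Bool) (y : Fin n → Bool) :
    (boolVec (Fin.cons b y : Fin (n + 1) → Bool) : Fin (n + 1) → R) =
      Fin.cons (if b then 1 else 0) (boolVec y) := by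
  funext i
  refine Fin.cases ?_ (fun j => ?_) i <;> simp [boolVec]

section FirstVariable

variable {n : ℕ} {P : MvPolynomial (Fin (n + 1)) R}

lemma eval_boolVec_cons (hP : P.degreeOf 0 ≤ 1) (b : Bool) (y : Fin n → Bool) :
    eval (boolVec (Fin.cons b y)) P =
      eval (boolVec y) ((finSuccEquiv R n P).coeff 0) +
        if b then eval (boolVec y) ((finSuccEquiv R n P).coeff 1) else 0 := by
  have hlin := Polynomial.eq_X_add_C_of_natDegree_le_one ((natDegree_finSuccEquiv P).trans_le hP)
  rw [boolVec_cons, eval_eq_eval_mv_eval']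
  conv_lhs => rw [hlin]
  cases b <;> simp [add_comm]

lemma card_nonzeroBoolPoints_coeff_one_le (hP : P.degreeOf 0 ≤ 1) :
    Nat.card (nonzeroBoolPoints ((finSuccEquiv R n P).coeff 1)) ≤
      Nat.card (nonzeroBoolPoints P) := by
  classical
  refine Nat.card_le_card_of_injective
    (fun y => ⟨Fin.cons (decide (eval (boolVec y.1) ((finSuccEquiv R n P).coeff 0) = 0)) y.1, ?_⟩)
    (fun y y' h => Subtype.ext (by simpa using congrArg Fin.tail (congrArg Subtype.val h)))
  change eval _ P ≠ 0
  have hy : eval (boolVec y.1) ((finSuccEquiv R n P).coeff 1) ≠ 0 := y.2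
  rw [eval_boolVec_cons hP]
  by_cases h : eval (boolVec y.1) ((finSuccEquiv R n P).coeff 0) = 0 <;> simp [h, hy]

lemma two_mul_card_nonzeroBoolPoints_coeff_zero_le (hP : P.degreeOf 0 ≤ 1)
    (hQ : (finSuccEquiv R n P).coeff 1 = 0) :
    2 * Nat.card (nonzeroBoolPoints ((finSuccEquiv R n P).coeff 0)) ≤
      Nat.card (nonzeroBoolPoints P) := by
  rw [show 2 = Nat.card Bool by simp, ← Nat.card_prod]
  refine Nat.card_le_card_of_injective (fun p => ⟨Fin.cons p.1 p.2.1, ?_⟩) ?_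
  · change eval _ P ≠ 0
    have hp : eval (boolVec p.2.1) ((finSuccEquiv R n P).coeff 0) ≠ 0 := p.2.2
    rw [eval_boolVec_cons hP, hQ]
    simpa using hp
  · rintro ⟨b, y⟩ ⟨b', y'⟩ h
    simp only [Subtype.mk.injEq, Fin.cons_inj] at h
    rw [h.1, Subtype.ext h.2]

end FirstVariable

theorem two_pow_sub_totalDegree_le_card_nonzeroBoolPoints {n : ℕ} {P : MvPolynomial (Fin n) R}
    (hP : P ≠ 0) (hml : ∀ i, P.degreeOf i ≤ 1) :
    2 ^ (n - P.totalDegree) ≤ Nat.card (nonzeroBoolPoints P) := by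
  induction n with
  | zero =>
    obtain ⟨a, rfl⟩ := C_surjective (Fin 0) P
    have ha : a ≠ 0 := fun h => hP (by rw [h, C_0])
    have : (Fin.elim0 : Fin 0 → Bool) ∈ nonzeroBoolPoints (C a) := by simpa [nonzeroBoolPoints]
    rw [Nat.zero_sub, pow_zero]
    exact Nat.card_pos_iff.2 ⟨⟨⟨_, this⟩⟩, inferInstance⟩
  | succ n ih =>
    have hml_coeff (k : ℕ) (j : Fin n) : ((finSuccEquiv R n P).coeff k).degreeOf j ≤ 1 :=
      (degreeOf_coeff_finSuccEquiv P j k).trans (hml j.succ)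
    by_cases hQ : (finSuccEquiv R n P).coeff 1 = 0
    · have hR : (finSuccEquiv R n P).coeff 0 ≠ 0 := by
        intro hR
        apply hP
        apply (finSuccEquiv R n).injective
        rw [map_zero, Polynomial.eq_X_add_C_of_natDegree_le_one
          ((natDegree_finSuccEquiv P).trans_le (hml 0)), hQ, hR]
        simp
      have hdeg := totalDegree_coeff_finSuccEquiv_add_le P 0 hR
      calc 2 ^ (n + 1 - P.totalDegree)
          ≤ 2 * 2 ^ (n - ((finSuccEquiv R n P).coeff 0).totalDegree) := by
            rw [← pow_succ']
            exact Nat.pow_le_pow_right two_pos (by omega)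
        _ ≤ 2 * Nat.card (nonzeroBoolPoints ((finSuccEquiv R n P).coeff 0)) :=
            Nat.mul_le_mul_left 2 (ih hR (hml_coeff 0))
        _ ≤ _ := two_mul_card_nonzeroBoolPoints_coeff_zero_le (hml 0) hQ
    · have hdeg := totalDegree_coeff_finSuccEquiv_add_le P 1 hQ
      calc 2 ^ (n + 1 - P.totalDegree)
          ≤ 2 ^ (n - ((finSuccEquiv R n P).coeff 1).totalDegree) :=
            Nat.pow_le_pow_right two_pos (by omega)
        _ ≤ Nat.card (nonzeroBoolPoints ((finSuccEquiv R n P).coeff 1)) := ih hQ (hml_coeff 1)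
        _ ≤ _ := card_nonzeroBoolPoints_coeff_one_le (hml 0)

end MvPolynomial

open MvPolynomial

/-- Schwartz's lemma for multilinear polynomials: a nonzero multilinear
polynomial of total degree at most `d` in `N` variables is nonzero on at
least `2^(N-d)` Boolean points, i.e. on at least a `2^(-d)` fraction of
all `2^N` Boolean points. -/
theorem schwartz_multilinear_boolean
    {N d : ℕ} (P : MvPolynomial (Fin N) ℝ) (hP : P ≠ 0)
    (hml : ∀ i, P.degreeOf i ≤ 1) (hd : P.totalDegree ≤ d) :
    2 ^ (N - d) ≤ Nat.card {x : Fin N → Bool //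
        MvPolynomial.eval (fun i => if x i then (1 : ℝ) else 0) P ≠ 0} ∧
    2 ^ N ≤ Nat.card {x : Fin N → Bool //
        MvPolynomial.eval (fun i => if x i then (1 : ℝ) else 0) P ≠ 0} * 2 ^ d := by
  have hcount : 2 ^ (N - d) ≤ Nat.card (nonzeroBoolPoints P) :=
    (Nat.pow_le_pow_right two_pos (by omega)).trans
      (two_pow_sub_totalDegree_le_card_nonzeroBoolPoints hP hml)
  refine ⟨hcount, ?_⟩
  calc 2 ^ N ≤ 2 ^ (N - d) * 2 ^ d := by
        rw [← pow_add]
        exact Nat.pow_le_pow_right two_pos (by omega)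
    _ ≤ Nat.card (nonzeroBoolPoints P) * 2 ^ d := Nat.mul_le_mul_right _ hcount
end

section
/- Fix n ≥ 1 and let V = (ZMod 2)^n. Encode a function x : V → V as a Boolean string X ∈ {0,1}^N with N = n·2^n, whose coordinates X_{i,t} (for i ∈ V and 1 ≤ t ≤ n) are the bits of the values x(i). Let P be a multilinear real polynomial in these N Boolean variables such that P(X) = 0 whenever f(x) = 0 and 1/2 ≤ P(X) ≤ 1 whenever f(x) = 1. Then the total degree of P is at least n(2^{n−1} − 1). -/
/-!
A nonzero multilinear polynomial of total degree `d` in `N` variables does not vanish on at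
least `2 ^ (N - d)` points of the Boolean cube: write `P = Q + x₀ R` and recurse on `Q` if
`R = 0`, on `R` otherwise. Here `P ≠ 0` (it is at least `1/2` on constant inputs) and `P`
vanishes on every input without a nonzero period. A `k`-periodic `x` is a function on the
`2 ^ (n - 1)` cosets of `{0, k}`, so at most `2 ^ n · (2 ^ n) ^ (2 ^ (n - 1))` inputs are
periodic. Comparing with `N = n · 2 ^ n` gives `d ≥ n (2 ^ (n - 1) - 1)`.
-/

open Finset Function

theorem ZMod.natCast_val_cons {R : Type*} [NatCast R] {m N : ℕ} (b : ZMod m)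
    (s : Fin N → ZMod m) :
    (fun i => (((Fin.cons b s : Fin (N + 1) → ZMod m) i).val : R)) =
      Fin.cons (b.val : R) fun i => ((s i).val : R) := by
  funext i
  cases i using Fin.cases <;> simp

namespace MvPolynomial

variable {R : Type*} [CommSemiring R]

open Classical in
noncomputable def cubeSupport {σ : Type*} [Fintype σ] (P : MvPolynomial σ R) :
    Finset (σ → ZMod 2) :=
  {x | eval (fun i => ((x i).val : R)) P ≠ 0}

theorem mem_cubeSupport {σ : Type*} [Fintype σ] {P : MvPolynomial σ R} {x : σ → ZMod 2} :
    x ∈ cubeSupport P ↔ eval (fun i => ((x i).val : R)) P ≠ 0 := by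
  simp [cubeSupport]

section FinSucc

variable {N : ℕ} {P : MvPolynomial (Fin (N + 1)) R}

theorem eval_cons_eq_of_degreeOf_zero_le_one (hP : P.degreeOf 0 ≤ 1) (y : R) (s : Fin N → R) :
    eval (Fin.cons y s) P =
      eval s ((finSuccEquiv R N P).coeff 0) + eval s ((finSuccEquiv R N P).coeff 1) * y := by
  have hq : (finSuccEquiv R N P).natDegree ≤ 1 := natDegree_finSuccEquiv P ▸ hP
  rw [eval_eq_eval_mv_eval']
  conv_lhs => rw [Polynomial.eq_X_add_C_of_natDegree_le_one hq]
  simp only [Polynomial.map_add, Polynomial.map_mul, Polynomial.map_C, Polynomial.map_X,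
    Polynomial.eval_add, Polynomial.eval_mul, Polynomial.eval_C, Polynomial.eval_X]
  ring

theorem two_mul_card_cubeSupport_coeff_zero_le (hP : P.degreeOf 0 ≤ 1)
    (h1 : (finSuccEquiv R N P).coeff 1 = 0) :
    2 * #(cubeSupport ((finSuccEquiv R N P).coeff 0)) ≤ #(cubeSupport P) := by
  have hprod : #((univ : Finset (ZMod 2)) ×ˢ cubeSupport ((finSuccEquiv R N P).coeff 0)) =
      2 * #(cubeSupport ((finSuccEquiv R N P).coeff 0)) := by simp [card_product]
  rw [← hprod]
  refine card_le_card_of_injOn (fun bs => Fin.cons bs.1 bs.2) ?_ ?_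
  · rintro ⟨b, s⟩ hs
    simp only [coe_product, Set.mem_prod, mem_coe, mem_cubeSupport] at hs ⊢
    rw [ZMod.natCast_val_cons, eval_cons_eq_of_degreeOf_zero_le_one hP, h1, map_zero, zero_mul,
      add_zero]
    exact hs.2
  · rintro ⟨b, s⟩ - ⟨b', s'⟩ - h
    exact Prod.ext_iff.2 (Fin.cons_injective2 h)

theorem card_cubeSupport_coeff_one_le (hP : P.degreeOf 0 ≤ 1) :
    #(cubeSupport ((finSuccEquiv R N P).coeff 1)) ≤ #(cubeSupport P) := by
  classical
  -- Put `x₀ = 0` where `coeff 0` does not vanish and `x₀ = 1` where it does.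
  refine card_le_card_of_injOn
    (fun s => Fin.cons
      (if eval (fun i => ((s i).val : R)) ((finSuccEquiv R N P).coeff 0) = 0 then 1 else 0) s) ?_ ?_
  · intro s hs
    simp only [mem_coe, mem_cubeSupport] at hs ⊢
    rw [ZMod.natCast_val_cons, eval_cons_eq_of_degreeOf_zero_le_one hP]
    split_ifs with hQ
    · simpa [hQ, ZMod.val_one''] using hs
    · simpa using hQ
  · intro s _ s' _ h
    exact (Fin.cons_injective2 h).2

end FinSucc

theorem two_pow_le_two_pow_totalDegree_mul_card_cubeSupport_fin :
    ∀ {N : ℕ} (P : MvPolynomial (Fin N) R), (∀ i, P.degreeOf i ≤ 1) → P ≠ 0 →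
      2 ^ N ≤ 2 ^ P.totalDegree * #(cubeSupport P)
  | 0, P, _, hP => by
    obtain ⟨c, rfl⟩ := C_surjective (Fin 0) P
    rw [pow_zero, totalDegree_C, pow_zero, one_mul, Nat.one_le_iff_ne_zero, card_ne_zero]
    exact ⟨0, mem_cubeSupport.2 (by simpa using hP)⟩
  | N + 1, P, hml, hP => by
    set q := finSuccEquiv R N P
    have hml_coeff (j : ℕ) (i : Fin N) : (q.coeff j).degreeOf i ≤ 1 :=
      (degreeOf_coeff_finSuccEquiv P i j).trans (hml _)
    by_cases h1 : q.coeff 1 = 0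
    · have h0 : q.coeff 0 ≠ 0 := by
        intro h0
        have hq : q = 0 := by
          rw [Polynomial.eq_X_add_C_of_natDegree_le_one (p := q)
            (natDegree_finSuccEquiv P ▸ hml 0), h0, h1]
          simp
        exact hP ((finSuccEquiv R N).map_eq_zero_iff.1 hq)
      have ih := two_pow_le_two_pow_totalDegree_mul_card_cubeSupport_fin _ (hml_coeff 0) h0
      have hdeg := totalDegree_coeff_finSuccEquiv_add_le P 0 h0
      have hcard := two_mul_card_cubeSupport_coeff_zero_le (hml 0) h1
      calc 2 ^ (N + 1) = 2 * 2 ^ N := by ring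
        _ ≤ 2 * (2 ^ (q.coeff 0).totalDegree * #(cubeSupport (q.coeff 0))) := by gcongr
        _ ≤ 2 ^ P.totalDegree * #(cubeSupport P) := by
          rw [mul_left_comm]
          gcongr
          · norm_num
          · omega
    · have ih := two_pow_le_two_pow_totalDegree_mul_card_cubeSupport_fin _ (hml_coeff 1) h1
      have hdeg := totalDegree_coeff_finSuccEquiv_add_le P 1 h1
      have hcard := card_cubeSupport_coeff_one_le (hml 0)
      calc 2 ^ (N + 1) = 2 * 2 ^ N := by ring
        _ ≤ 2 * (2 ^ (q.coeff 1).totalDegree * #(cubeSupport (q.coeff 1))) := by gcongr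
        _ = 2 ^ ((q.coeff 1).totalDegree + 1) * #(cubeSupport (q.coeff 1)) := by ring
        _ ≤ 2 ^ P.totalDegree * #(cubeSupport P) := by gcongr; norm_num

theorem card_cubeSupport_renameEquiv {σ τ : Type*} [Fintype σ] [Fintype τ] (e : σ ≃ τ)
    (P : MvPolynomial σ R) : #(cubeSupport (renameEquiv R e P)) = #(cubeSupport P) := by
  refine card_nbij' (· ∘ e) (· ∘ e.symm) ?_ ?_ ?_ ?_
  · intro y hy
    simpa [mem_cubeSupport, eval_rename, Function.comp_def] using hy
  · intro x hx
    simpa [mem_cubeSupport, eval_rename, Function.comp_def] using hx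
  · intro y _; ext; simp
  · intro x _; ext; simp

theorem two_pow_card_le_two_pow_totalDegree_mul_card_cubeSupport {σ : Type*} [Fintype σ]
    (P : MvPolynomial σ R) (hml : ∀ i, P.degreeOf i ≤ 1) (hP : P ≠ 0) :
    2 ^ Fintype.card σ ≤ 2 ^ P.totalDegree * #(cubeSupport P) := by
  let e := Fintype.equivFin σ
  have hml' (i : Fin (Fintype.card σ)) : (renameEquiv R e P).degreeOf i ≤ 1 := by
    rw [renameEquiv_apply, ← e.apply_symm_apply i, degreeOf_rename_of_injective e.injective]
    exact hml _
  have := two_pow_le_two_pow_totalDegree_mul_card_cubeSupport_fin _ hml'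
    ((renameEquiv R e).map_ne_zero_iff.2 hP)
  rwa [totalDegree_renameEquiv, card_cubeSupport_renameEquiv] at this

end MvPolynomial

section Periodic

variable {G α : Type*} [AddGroup G]

theorem Function.Periodic.apply_out_mk {x : G → α} {k : G} (hx : Periodic x k) (i : G) :
    x (QuotientAddGroup.mk (s := AddSubgroup.zmultiples k) i).out = x i := by
  obtain ⟨⟨h, hh⟩, hout⟩ := QuotientAddGroup.mk_out_eq_add (AddSubgroup.zmultiples k) i
  obtain ⟨m, rfl⟩ := AddSubgroup.mem_zmultiples_iff.1 hh
  rw [hout]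
  exact hx.zsmul m i

theorem AddSubgroup.card_quotient_zmultiples_le [Finite G] {k : G} (hk : k ≠ 0) :
    Nat.card (G ⧸ zmultiples k) ≤ Nat.card G / 2 := by
  have hord : 2 ≤ addOrderOf k := by
    have := addOrderOf_pos k
    have := mt AddMonoid.addOrderOf_eq_one_iff.1 hk
    omega
  rw [(zmultiples k).card_eq_card_quotient_mul_card_addSubgroup, Nat.card_zmultiples,
    Nat.le_div_iff_mul_le two_pos]
  exact Nat.mul_le_mul_left _ hord

variable [Fintype G] [DecidableEq G] [Fintype α] [DecidableEq α]

theorem card_periodic_le (k : G) :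
    #{x : G → α | ∀ i, x (i + k) = x i} ≤
      Fintype.card α ^ Nat.card (G ⧸ AddSubgroup.zmultiples k) := by
  rw [← Nat.card_eq_fintype_card, ← Nat.card_fun, ← Nat.card_eq_finsetCard]
  refine Nat.card_le_card_of_injective (fun x q => (x : G → α) q.out) ?_
  rintro ⟨x, hx⟩ ⟨y, hy⟩ hxy
  simp only [mem_filter, mem_univ, true_and] at hx hy
  refine Subtype.ext (funext fun i => ?_)
  simpa only [Periodic.apply_out_mk hx, Periodic.apply_out_mk hy] using
    congrFun hxy (QuotientAddGroup.mk i)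

theorem card_exists_periodic_le [Nonempty α] :
    #{x : G → α | ∃ k, k ≠ 0 ∧ ∀ i, x (i + k) = x i} ≤
      Fintype.card G * Fintype.card α ^ (Fintype.card G / 2) := by
  calc #{x : G → α | ∃ k, k ≠ 0 ∧ ∀ i, x (i + k) = x i}
      ≤ #((univ.erase 0).biUnion fun k => {x : G → α | ∀ i, x (i + k) = x i}) := by
        refine card_le_card fun x hx => ?_
        obtain ⟨k, hk, hxk⟩ := (mem_filter.1 hx).2
        exact mem_biUnion.2
          ⟨k, mem_erase.2 ⟨hk, mem_univ k⟩, mem_filter.2 ⟨mem_univ x, hxk⟩⟩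
    _ ≤ ∑ k ∈ univ.erase 0, #{x : G → α | ∀ i, x (i + k) = x i} := card_biUnion_le
    _ ≤ #(univ.erase (0 : G)) * Fintype.card α ^ (Fintype.card G / 2) := by
        refine sum_le_card_nsmul _ _ _ fun k hk => (card_periodic_le k).trans ?_
        rw [← Nat.card_eq_fintype_card (α := G)]
        exact Nat.pow_le_pow_right Fintype.card_pos
          (AddSubgroup.card_quotient_zmultiples_le (mem_erase.1 hk).1)
    _ ≤ Fintype.card G * Fintype.card α ^ (Fintype.card G / 2) := by
        gcongr
        exact card_le_univ _

end Periodic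

open MvPolynomial

theorem totalDegree_lower_bound_modified_simon_general
    {n : ℕ}
    (P : MvPolynomial ((Fin n → ZMod 2) × Fin n) ℝ)
    (hml : ∀ v, P.degreeOf v ≤ 1)
    (h0 : ∀ x : (Fin n → ZMod 2) → (Fin n → ZMod 2),
      ¬ (∃ k, k ≠ 0 ∧ ∀ i, x (i + k) = x i) →
      MvPolynomial.eval (fun p => ((x p.1 p.2).val : ℝ)) P = 0)
    (h1 : ∀ x : (Fin n → ZMod 2) → (Fin n → ZMod 2),
      (∃ k, k ≠ 0 ∧ ∀ i, x (i + k) = x i) →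
      MvPolynomial.eval (fun p => ((x p.1 p.2).val : ℝ)) P ∈ Set.Icc (1/2 : ℝ) 1) :
    n * (2 ^ (n - 1) - 1) ≤ P.totalDegree := by
  obtain _ | m := n
  · simp
  have hP : P ≠ 0 := by
    rintro rfl
    have := h1 0 ⟨fun _ => 1, fun h => one_ne_zero (congrFun h 0), fun _ => rfl⟩
    norm_num at this
  have hsupp : #(cubeSupport P) ≤ #{x : (Fin (m + 1) → ZMod 2) → (Fin (m + 1) → ZMod 2) |
      ∃ k, k ≠ 0 ∧ ∀ i, x (i + k) = x i} := by
    refine card_le_card_of_injOn curry (fun y hy => ?_) curry_injective.injOn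
    rw [mem_coe, mem_filter]
    exact ⟨mem_univ _, by_contra fun hx => mem_cubeSupport.1 hy (h0 (curry y) hx)⟩
  have hcube := (two_pow_card_le_two_pow_totalDegree_mul_card_cubeSupport P hml hP).trans
    (Nat.mul_le_mul_left _ (hsupp.trans card_exists_periodic_le))
  simp only [Fintype.card_prod, Fintype.card_fun, ZMod.card, Fintype.card_fin] at hcube
  rw [← pow_mul, ← pow_add, ← pow_add, Nat.pow_le_pow_iff_right one_lt_two,
    pow_succ 2 m, Nat.mul_div_cancel _ two_pos] at hcube
  rw [Nat.add_sub_cancel]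
  have := Nat.one_le_two_pow (n := m)
  zify [this] at hcube ⊢
  nlinarith

/-- Any multilinear real polynomial in the `n·2^n` Boolean variables encoding a
function `x : (ZMod 2)^n → (ZMod 2)^n` that vanishes on all aperiodic inputs
(`f(x) = 0`) and takes values in `[1/2, 1]` on all inputs having a nonzero
period (`f(x) = 1`) must have total degree at least `n(2^(n-1) - 1)`. -/
theorem totalDegree_lower_bound_modified_simon
    {n : ℕ} (hn : 1 ≤ n)
    (P : MvPolynomial ((Fin n → ZMod 2) × Fin n) ℝ)
    (hml : ∀ v, P.degreeOf v ≤ 1)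
    (h0 : ∀ x : (Fin n → ZMod 2) → (Fin n → ZMod 2),
      ¬ (∃ k, k ≠ 0 ∧ ∀ i, x (i + k) = x i) →
      MvPolynomial.eval (fun p => ((x p.1 p.2).val : ℝ)) P = 0)
    (h1 : ∀ x : (Fin n → ZMod 2) → (Fin n → ZMod 2),
      (∃ k, k ≠ 0 ∧ ∀ i, x (i + k) = x i) →
      MvPolynomial.eval (fun p => ((x p.1 p.2).val : ℝ)) P ∈ Set.Icc (1/2 : ℝ) 1) :
    n * (2 ^ (n - 1) - 1) ≤ P.totalDegree :=
  totalDegree_lower_bound_modified_simon_general P hml h0 h1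
end

section
/- Fix n ≥ 1 and let V = (ZMod 2)^n, with inner product (a, b) = Σ_{t=1}^n a_t·b_t computed in ZMod 2. Let k ∈ V be nonzero, let x : V → V be k-periodic, and let j ∈ V and i' ∈ V satisfy (k, i') = 1. Then Σ_{i ∈ V, x(i) = j} (−1)^{(i, i')} = 0, where the exponent (i, i') ∈ {0,1} is the inner product lifted to an integer. -/
open Finset

/-- Translation by `k` permutes each fiber of `f` while negating `g`, so the fiber sum equals its
own negative. -/
theorem Finset.sum_fiber_eq_zero_of_antiperiodic {G β M : Type*} [AddGroup G] [Fintype G]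
    [DecidableEq β] [AddCommGroup M] [IsAddTorsionFree M] {f : G → β} {g : G → M} {k : G}
    (hf : Function.Periodic f k) (hg : Function.Antiperiodic g k) (b : β) :
    ∑ i ∈ univ.filter (fun i => f i = b), g i = 0 := by
  set S := ∑ i ∈ univ.filter (fun i => f i = b), g i
  have hS : S = -S := calc
    S = ∑ i ∈ univ.filter (fun i => f i = b), g (i + k) :=
      (sum_equiv (Equiv.addRight k) (by simp [hf _]) fun _ _ => rfl).symm
    _ = -S := by simp only [hg _, sum_neg_distrib, S]
  exact self_eq_neg.mp hS

theorem ZMod.neg_one_pow_val_add_one (a : ZMod 2) : (-1 : ℤ) ^ (a + 1).val = -(-1) ^ a.val := by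
  fin_cases a <;> rfl

theorem antiperiodic_neg_one_pow_dotProduct {ι : Type*} [Fintype ι] {k v : ι → ZMod 2}
    (h : k ⬝ᵥ v = 1) : Function.Antiperiodic (fun i => (-1 : ℤ) ^ (i ⬝ᵥ v).val) k := by
  intro i
  simp only [add_dotProduct, h, ZMod.neg_one_pow_val_add_one]

theorem periodic_signed_fiber_sum_zero_general
    {n : ℕ}
    (k : Fin n → ZMod 2)
    (x : (Fin n → ZMod 2) → (Fin n → ZMod 2))
    (hx : ∀ i, x (i + k) = x i)
    (j : Fin n → ZMod 2) (i' : Fin n → ZMod 2)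
    (hki' : ∑ t, k t * i' t = 1) :
    ∑ i ∈ Finset.univ.filter (fun i => x i = j),
      ((-1 : ℤ) ^ (∑ t, i t * i' t).val) = 0 :=
  sum_fiber_eq_zero_of_antiperiodic hx (antiperiodic_neg_one_pow_dotProduct hki') j

/-- If `x` is `k`-periodic for a nonzero `k` and `i'` is non-orthogonal to `k`
(inner product `(k, i') = 1` in `ZMod 2`), then the signed sum
`Σ_{i : x(i) = j} (-1)^{(i, i')}` vanishes. -/
theorem periodic_signed_fiber_sum_zero
    {n : ℕ} (hn : 1 ≤ n)
    (k : Fin n → ZMod 2) (hk : k ≠ 0)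
    (x : (Fin n → ZMod 2) → (Fin n → ZMod 2))
    (hx : ∀ i, x (i + k) = x i)
    (j : Fin n → ZMod 2) (i' : Fin n → ZMod 2)
    (hki' : ∑ t, k t * i' t = 1) :
    ∑ i ∈ Finset.univ.filter (fun i => x i = j),
      ((-1 : ℤ) ^ (∑ t, i t * i' t).val) = 0 :=
  periodic_signed_fiber_sum_zero_general k x hx j i' hki'
end

section
/- Fix α ∈ (0, 1/2). There exist constants c_1, c_2 > 0 (depending only on α) such that for every N ≥ 1, the μ-expectation of the classical query cost N/(|X|+1) satisfies c_1·N^α ≤ Σ_{X ∈ {0,1}^N} μ(X)·N/(|X|+1) ≤ c_2·N^α. -/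
/-!
Both sums depend on `X` only through its weight `t`, and the `C(N,t)` inputs of weight `t`
cancel the binomial coefficient in `μ`. With `S = ∑_{t ≤ N} (t+1)^(-α)` and
`T = ∑_{t ≤ N} (t+1)^(-(1+α))`, the normalisation reads `c·S = (N+1)^(1-α)` and the expected
cost is `N·T/S`. Telescoping against Bernoulli's inequality gives
`(N+1)^(1-α) ≤ S ≤ (N+1)^(1-α)/(1-α)` and `1 ≤ T ≤ 1 + 1/α`, so the expected cost is
`Θ(N/(N+1)^(1-α)) = Θ(N^α)`.
-/

open Finset

/-- Hamming weight of a Boolean input `X ∈ {0,1}^N`. -/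
def hammingWt {N : ℕ} (X : Fin N → Bool) : ℕ :=
  (Finset.univ.filter (fun i => X i = true)).card

/-- The distribution `μ(X) = c / (C(N,|X|)·(|X|+1)^α·(N+1)^(1-α))`. -/
noncomputable def muDist (α : ℝ) {N : ℕ} (c : ℝ) (X : Fin N → Bool) : ℝ :=
  c / ((N.choose (hammingWt X) : ℝ) * ((hammingWt X : ℝ) + 1) ^ α *
    ((N : ℝ) + 1) ^ (1 - α))

open Real

theorem sum_hammingWt {M : Type*} [AddCommMonoid M] (N : ℕ) (g : ℕ → M) :
    ∑ X : Fin N → Bool, g (hammingWt X) = ∑ t ∈ range (N + 1), N.choose t • g t := by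
  calc ∑ X : Fin N → Bool, g (hammingWt X)
      = ∑ s ∈ (univ : Finset (Fin N)).powerset, g s.card :=
        sum_nbij' (fun X => univ.filter (X · = true)) (fun s i => decide (i ∈ s))
          (by simp) (by simp) (fun X _ => by ext; simp) (fun s _ => by ext; simp)
          (fun _ _ => rfl)
    _ = ∑ t ∈ range (N + 1), N.choose t • g t := by
        rw [sum_powerset_apply_card, card_univ, Fintype.card_fin]

theorem mul_rpow_sub_one_le_add_one_rpow_sub_rpow {p k : ℝ} (hp₀ : 0 ≤ p) (hp₁ : p ≤ 1)
    (hk : 0 ≤ k) : p * (k + 1) ^ (p - 1) ≤ (k + 1) ^ p - k ^ p := by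
  have hk₁ : 0 < k + 1 := by linarith
  have hs : -1 ≤ -(k + 1)⁻¹ := neg_le_neg (inv_le_one_of_one_le₀ (by linarith))
  have bernoulli := rpow_one_add_le_one_add_mul_self hs hp₀ hp₁
  rw [show 1 + -(k + 1)⁻¹ = k / (k + 1) by field_simp; ring, div_rpow hk hk₁.le,
    div_le_iff₀ (rpow_pos_of_pos hk₁ p)] at bernoulli
  rw [rpow_sub_one hk₁.ne']
  linarith [show (1 + p * -(k + 1)⁻¹) * (k + 1) ^ p = (k + 1) ^ p - p * ((k + 1) ^ p / (k + 1))
    by ring]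

theorem mul_rpow_neg_one_add_le_rpow_neg_sub {α k : ℝ} (hα₀ : 0 < α) (hα₁ : α ≤ 1)
    (hk : 0 < k) : α * (k + 1) ^ (-(1 + α)) ≤ k ^ (-α) - (k + 1) ^ (-α) := by
  have hk₁ : 0 < k + 1 := by linarith
  have hmono : k ^ α ≤ (k + 1) ^ α := rpow_le_rpow hk.le (by linarith) hα₀.le
  have hgap := mul_rpow_sub_one_le_add_one_rpow_sub_rpow hα₀.le hα₁ hk.le
  calc α * (k + 1) ^ (-(1 + α)) = α * (k + 1) ^ (α - 1) / ((k + 1) ^ α * (k + 1) ^ α) := by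
        rw [← rpow_add hk₁, mul_div_assoc, ← rpow_sub hk₁]; ring_nf
    _ ≤ ((k + 1) ^ α - k ^ α) / ((k + 1) ^ α * (k + 1) ^ α) := by gcongr
    _ ≤ ((k + 1) ^ α - k ^ α) / (k ^ α * (k + 1) ^ α) := by
        gcongr
    _ = k ^ (-α) - (k + 1) ^ (-α) := by
        rw [rpow_neg hk.le, rpow_neg hk₁.le]
        field_simp [(rpow_pos_of_pos hk α).ne', (rpow_pos_of_pos hk₁ α).ne']

section PartialZetaSums

variable {α : ℝ} (n : ℕ)

theorem add_one_rpow_one_sub_le_sum_range_rpow_neg (hα : 0 ≤ α) :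
    ((n : ℝ) + 1) ^ (1 - α) ≤ ∑ t ∈ range (n + 1), ((t : ℝ) + 1) ^ (-α) := by
  have hn : (0 : ℝ) < n + 1 := by positivity
  calc ((n : ℝ) + 1) ^ (1 - α) = ∑ _t ∈ range (n + 1), ((n : ℝ) + 1) ^ (-α) := by
        rw [sum_const, card_range, nsmul_eq_mul, sub_eq_add_neg, rpow_add hn, rpow_one]
        push_cast; ring
    _ ≤ ∑ t ∈ range (n + 1), ((t : ℝ) + 1) ^ (-α) := by
        refine sum_le_sum fun t ht => rpow_le_rpow_of_nonpos (by positivity) ?_ (by linarith)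
        have : t ≤ n := Nat.lt_succ_iff.mp (mem_range.mp ht)
        gcongr

theorem sum_range_rpow_neg_le (hα₀ : 0 ≤ α) (hα₁ : α < 1) :
    ∑ t ∈ range (n + 1), ((t : ℝ) + 1) ^ (-α) ≤ ((n : ℝ) + 1) ^ (1 - α) / (1 - α) := by
  have hα : 0 < 1 - α := by linarith
  calc ∑ t ∈ range (n + 1), ((t : ℝ) + 1) ^ (-α)
      ≤ ∑ t ∈ range (n + 1), (((t + 1 : ℕ) : ℝ) ^ (1 - α) - (t : ℝ) ^ (1 - α)) / (1 - α) := by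
        refine sum_le_sum fun t _ => (le_div_iff₀ hα).mpr ?_
        have := mul_rpow_sub_one_le_add_one_rpow_sub_rpow hα.le (by linarith) t.cast_nonneg
        rw [sub_sub_cancel_left] at this
        push_cast
        linarith
    _ = ((n : ℝ) + 1) ^ (1 - α) / (1 - α) := by
        rw [← sum_div, sum_range_sub (fun t : ℕ => (t : ℝ) ^ (1 - α))]
        simp [zero_rpow hα.ne']

theorem one_le_sum_range_rpow_neg (s : ℝ) :
    1 ≤ ∑ t ∈ range (n + 1), ((t : ℝ) + 1) ^ (-s) := by
  simpa using single_le_sum (f := fun t : ℕ => ((t : ℝ) + 1) ^ (-s))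
    (fun t _ => by positivity) (mem_range.mpr n.succ_pos)

theorem sum_range_rpow_neg_one_add_le (hα₀ : 0 < α) (hα₁ : α ≤ 1) :
    ∑ t ∈ range (n + 1), ((t : ℝ) + 1) ^ (-(1 + α)) ≤ 1 + 1 / α := by
  have htail : ∑ t ∈ range n, (((t + 1 : ℕ) : ℝ) + 1) ^ (-(1 + α)) ≤ 1 / α := by
    calc ∑ t ∈ range n, (((t + 1 : ℕ) : ℝ) + 1) ^ (-(1 + α))
        ≤ ∑ t ∈ range n, ((((t : ℕ) : ℝ) + 1) ^ (-α) - (((t + 1 : ℕ) : ℝ) + 1) ^ (-α)) / α := by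
          refine sum_le_sum fun t _ => (le_div_iff₀ hα₀).mpr ?_
          have := mul_rpow_neg_one_add_le_rpow_neg_sub hα₀ hα₁ (k := (t : ℝ) + 1) (by positivity)
          push_cast
          linarith
      _ = (1 - ((n : ℝ) + 1) ^ (-α)) / α := by
          rw [← sum_div, sum_range_sub' (fun t : ℕ => ((t : ℝ) + 1) ^ (-α))]
          simp
      _ ≤ 1 / α := by gcongr; linarith [rpow_nonneg (by positivity : (0 : ℝ) ≤ n + 1) (-α)]
  rw [sum_range_succ', Nat.cast_zero, zero_add, one_rpow]
  linarith

end PartialZetaSums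

theorem sum_muDist_mul (α c : ℝ) (N : ℕ) (g : ℕ → ℝ) :
    ∑ X : Fin N → Bool, muDist α c X * g (hammingWt X)
      = c / ((N : ℝ) + 1) ^ (1 - α) * ∑ t ∈ range (N + 1), ((t : ℝ) + 1) ^ (-α) * g t := by
  refine (sum_hammingWt N (fun t => c / ((N.choose t : ℝ) * ((t : ℝ) + 1) ^ α *
    ((N : ℝ) + 1) ^ (1 - α)) * g t)).trans ?_
  rw [mul_sum]
  refine sum_congr rfl fun t ht => ?_
  have hchoose : (N.choose t : ℝ) ≠ 0 :=
    Nat.cast_ne_zero.mpr (Nat.choose_pos (Nat.lt_succ_iff.mp (mem_range.mp ht))).ne'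
  have ht₁ : (0 : ℝ) < t + 1 := by positivity
  rw [nsmul_eq_mul, rpow_neg ht₁.le]
  field_simp

theorem sum_muDist (α c : ℝ) (N : ℕ) :
    ∑ X : Fin N → Bool, muDist α c X
      = c / ((N : ℝ) + 1) ^ (1 - α) * ∑ t ∈ range (N + 1), ((t : ℝ) + 1) ^ (-α) := by
  simpa using sum_muDist_mul α c N (fun _ => 1)

theorem sum_muDist_mul_queryCost (α c : ℝ) (N : ℕ) :
    ∑ X : Fin N → Bool, muDist α c X * ((N : ℝ) / ((hammingWt X : ℝ) + 1))
      = c / ((N : ℝ) + 1) ^ (1 - α) *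
          ((N : ℝ) * ∑ t ∈ range (N + 1), ((t : ℝ) + 1) ^ (-(1 + α))) := by
  rw [sum_muDist_mul α c N (fun t => (N : ℝ) / ((t : ℝ) + 1)), mul_sum _ _ (N : ℝ)]
  refine congrArg (c / ((N : ℝ) + 1) ^ (1 - α) * ·) (sum_congr rfl fun t _ => ?_)
  have ht₁ : (0 : ℝ) < t + 1 := by positivity
  rw [neg_add, rpow_add ht₁, rpow_neg_one]
  ring

theorem rpow_div_two_le_div_add_one_rpow {x α : ℝ} (hx : 1 ≤ x) (hα₀ : 0 ≤ α) (hα₁ : α ≤ 1) :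
    x ^ α / 2 ≤ x / (x + 1) ^ (1 - α) := by
  have hx₀ : 0 < x := by linarith
  have hsplit : x = x ^ α * x ^ (1 - α) := by rw [← rpow_add hx₀]; norm_num
  have hD : (x + 1) ^ (1 - α) ≤ 2 * x ^ (1 - α) :=
    calc (x + 1) ^ (1 - α) ≤ (2 * x) ^ (1 - α) := by gcongr; linarith
      _ = 2 ^ (1 - α) * x ^ (1 - α) := mul_rpow (by norm_num) hx₀.le
      _ ≤ 2 * x ^ (1 - α) := by
          gcongr
          exact rpow_le_self_of_one_le one_le_two (by linarith)
  rw [div_le_div_iff₀ two_pos (by positivity)]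
  calc x ^ α * (x + 1) ^ (1 - α) ≤ x ^ α * (2 * x ^ (1 - α)) := by gcongr
    _ = x ^ α * x ^ (1 - α) * 2 := by ring
    _ = x * 2 := by rw [← hsplit]

theorem div_add_one_rpow_le_rpow {x α : ℝ} (hx : 0 < x) (hα : α ≤ 1) :
    x / (x + 1) ^ (1 - α) ≤ x ^ α := by
  rw [div_le_iff₀ (by positivity)]
  calc x = x ^ α * x ^ (1 - α) := by rw [← rpow_add hx]; norm_num
    _ ≤ x ^ α * (x + 1) ^ (1 - α) := by
        gcongr
        all_goals linarith

/-- For `α ∈ (0, 1/2)`, the μ-expectation of the classical query cost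
`N/(|X|+1)` is `Θ(N^α)`. -/
theorem average_classical_or_cost_theta
    (α : ℝ) (hα0 : 0 < α) (hα1 : α < 1 / 2) :
    ∃ c₁ > (0 : ℝ), ∃ c₂ > (0 : ℝ), ∀ N : ℕ, 1 ≤ N → ∀ c : ℝ,
      (∑ X : Fin N → Bool, muDist α c X = 1) →
      c₁ * (N : ℝ) ^ α ≤
          (∑ X : Fin N → Bool,
            muDist α c X * ((N : ℝ) / ((hammingWt X : ℝ) + 1))) ∧
        (∑ X : Fin N → Bool,
            muDist α c X * ((N : ℝ) / ((hammingWt X : ℝ) + 1)))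
          ≤ c₂ * (N : ℝ) ^ α := by
  have hα1' : α < 1 := by linarith
  refine ⟨(1 - α) / 2, by linarith, 1 + 1 / α, by positivity, fun N hN c hμ => ?_⟩
  set D := ((N : ℝ) + 1) ^ (1 - α)
  set S := ∑ t ∈ range (N + 1), ((t : ℝ) + 1) ^ (-α)
  set T := ∑ t ∈ range (N + 1), ((t : ℝ) + 1) ^ (-(1 + α))
  have hD : 0 < D := by positivity
  have hDS : D ≤ S := add_one_rpow_one_sub_le_sum_range_rpow_neg N hα0.le
  have hSD : (1 - α) / D ≤ 1 / S := by
    rw [div_le_div_iff₀ hD (hD.trans_le hDS), one_mul, mul_comm, ← le_div_iff₀ (by linarith)]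
    exact sum_range_rpow_neg_le N hα0.le hα1'
  have hc : c / D = 1 / S := eq_one_div_of_mul_eq_one_left (by rw [← sum_muDist, hμ])
  have hN₁ : (1 : ℝ) ≤ N := by exact_mod_cast hN
  rw [sum_muDist_mul_queryCost, hc]
  constructor
  · calc (1 - α) / 2 * (N : ℝ) ^ α = (1 - α) * ((N : ℝ) ^ α / 2) := by ring
      _ ≤ (1 - α) * (N / D) := mul_le_mul_of_nonneg_left
          (rpow_div_two_le_div_add_one_rpow hN₁ hα0.le hα1'.le) (by linarith)
      _ = (1 - α) / D * (N * 1) := by ring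
      _ ≤ 1 / S * (N * T) := by gcongr; exact one_le_sum_range_rpow_neg N (1 + α)
  · calc 1 / S * (N * T) ≤ 1 / D * (N * (1 + 1 / α)) := by
          gcongr
          exact sum_range_rpow_neg_one_add_le N hα0 hα1'.le
      _ = (1 + 1 / α) * (N / D) := by ring
      _ ≤ (1 + 1 / α) * (N : ℝ) ^ α := by
          gcongr
          exact div_add_one_rpow_le_rpow (by linarith) hα1'.le
end

section
/- There exists a constant c > 0 such that for all n ≥ 1, letting V = (ZMod 2)^n, the number of functions x : V → V for which fewer than 2^n/8 elements j ∈ V have exactly one preimage under x (i.e., |{j ∈ V : there is exactly one i with x(i) = j}| < 2^n/8) is at most 2^{−c·2^n}·(2^n)^{2^n}. -/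
/-!
Let `U x` be the number of values of `x : α → α` with exactly one preimage and `N = |α|`.
Since `(1/4) ^ U x = ∏ j, w |x⁻¹ j|` with `w 1 = 1/4` and `w m = 1` otherwise, grouping the
functions by their fibre sizes `c` (there are at most `N! / ∏ j, c j !` of them for each `c`)
bounds the exponential moment `∑ x, (1/4) ^ U x` by `N! (e - 3/4) ^ N`. Markov's inequality
and Stirling's bound `N! ≤ e √N (N/e) ^ N` then show that at most `e √N (3/4 · 2^(1/4)) ^ N · N ^ N`
functions have `U x < N/8`, an exponentially small fraction of all of them. For the finitely
many small `N` it suffices that the identity is not counted, at the price of a smaller constant.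
-/

open Finset Filter Topology
open scoped Nat

section FiberCard

variable {α ι : Type*} [Fintype α] [DecidableEq ι]

def fiberCard (x : α → ι) (j : ι) : ℕ := Fintype.card {i // x i = j}

lemma exists_perm_comp_eq_of_fiberCard_eq {x y : α → ι} (h : fiberCard y = fiberCard x) :
    ∃ σ : Equiv.Perm α, x ∘ σ = y :=
  ⟨Equiv.ofFiberEquiv fun j => Fintype.equivOfCardEq (congrFun h j),
    funext fun _ => Equiv.ofFiberEquiv_map _ _⟩

lemma pow_card_existsUnique_eq_prod [Fintype ι] {M : Type*} [CommMonoid M] (x : α → ι)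
    (u : M) :
    u ^ Nat.card {j // ∃! i, x i = j} = ∏ j, if fiberCard x j = 1 then u else 1 := by
  rw [prod_ite, prod_const, prod_const_one, mul_one,
    Nat.card_congr (Equiv.subtypeEquivRight fun j => Fintype.existsUnique_iff_card_one _),
    Nat.card_eq_fintype_card]
  simp only [fiberCard, Fintype.card_subtype]

variable [DecidableEq α] [Fintype ι]

lemma card_perm_comp_eq_comp (x : α → ι) (τ : Equiv.Perm α) :
    #{σ : Equiv.Perm α | x ∘ σ = x ∘ τ} = ∏ j, (fiberCard x j)! := by
  simp only [fiberCard]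
  rw [← DomMulAct.stabilizer_card, ← Fintype.card_subtype]
  refine Fintype.card_congr (Equiv.subtypeEquiv (Equiv.mulRight τ⁻¹) fun σ => ?_)
  constructor
  · intro h; funext a; simpa using congrFun h (τ⁻¹ a)
  · intro h; funext a; simpa using congrFun h (τ a)

lemma card_fiberCard_eq_mul_prod_factorial_le (x : α → ι) :
    #{y : α → ι | fiberCard y = fiberCard x} * ∏ j, (fiberCard x j)! ≤ (Fintype.card α)! := by
  rw [← Fintype.card_perm, ← Finset.card_univ, ← mul_one #univ]
  refine card_mul_le_card_mul (fun (y : α → ι) (σ : Equiv.Perm α) => x ∘ σ = y)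
    (fun y hy => ?_) (fun σ _ => ?_)
  · obtain ⟨τ, rfl⟩ := exists_perm_comp_eq_of_fiberCard_eq (mem_filter.1 hy).2
    rw [bipartiteAbove, card_perm_comp_eq_comp]
  · exact card_le_one.2 fun y hy y' hy' => by
      simp only [bipartiteBelow, mem_filter] at hy hy'
      rw [← hy.2, hy'.2]

lemma sum_prod_fiberCard_of_fiberCard_eq_le (w : ℕ → ℝ) (hw : ∀ m, 0 ≤ w m) (c : ι → ℕ) :
    ∑ x : α → ι with fiberCard x = c, ∏ j, w (fiberCard x j) ≤
      (Fintype.card α)! * ∏ j, w (c j) / (c j)! := by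
  rw [sum_congr rfl fun x hx => by rw [(mem_filter.1 hx).2], sum_const, nsmul_eq_mul,
    prod_div_distrib, mul_div_assoc', le_div_iff₀ (by positivity), mul_right_comm]
  gcongr
  · exact prod_nonneg fun j _ => hw (c j)
  rcases (filter (fun x : α → ι => fiberCard x = c) univ).eq_empty_or_nonempty with h | ⟨x, hx⟩
  · simp [h]
  · obtain rfl := (mem_filter.1 hx).2
    exact_mod_cast card_fiberCard_eq_mul_prod_factorial_le x

lemma sum_prod_fiberCard_le (w : ℕ → ℝ) (hw : ∀ m, 0 ≤ w m) :
    ∑ x : α → ι, ∏ j, w (fiberCard x j) ≤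
      (Fintype.card α)! * (∑ m ∈ range (Fintype.card α + 1), w m / m !) ^ Fintype.card ι := by
  have hmaps : ∀ x ∈ (univ : Finset (α → ι)),
      fiberCard x ∈ Fintype.piFinset fun _ : ι => range (Fintype.card α + 1) := fun x _ =>
    Fintype.mem_piFinset.2 fun j => mem_range_succ_iff.2 (Fintype.card_subtype_le _)
  rw [← sum_fiberwise_of_maps_to hmaps]
  calc _ ≤ ∑ c ∈ Fintype.piFinset fun _ : ι => range (Fintype.card α + 1),
        (Fintype.card α)! * ∏ j, w (c j) / (c j)! :=
      sum_le_sum fun c _ => sum_prod_fiberCard_of_fiberCard_eq_le w hw c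
    _ = _ := by
      rw [← mul_sum, ← prod_univ_sum (fun _ : ι => range (Fintype.card α + 1))
        (fun _ m => w m / m !), prod_const, Finset.card_univ]

end FiberCard

lemma card_filter_lt_mul_rpow_le {β : Type*} [Fintype β] (f : β → ℕ) {u : ℝ} (hu₀ : 0 < u)
    (hu₁ : u ≤ 1) (t : ℝ) : #{b | (f b : ℝ) < t} * u ^ t ≤ ∑ b, u ^ f b := by
  rw [← nsmul_eq_mul, ← sum_const]
  refine (sum_le_sum fun b hb => ?_).trans (sum_le_sum_of_subset_of_nonneg (subset_univ _)
    fun b _ _ => by positivity)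
  rw [← Real.rpow_natCast]
  exact Real.rpow_le_rpow_of_exponent_ge hu₀ hu₁ (mem_filter.1 hb).2.le

lemma sum_range_ite_one_div_factorial_le (N : ℕ) {u : ℝ} (hu : 0 ≤ u) :
    ∑ m ∈ range (N + 1), (if m = 1 then u else 1) / m ! ≤ Real.exp 1 - 1 + u := by
  have hexp := Real.sum_le_exp_of_nonneg zero_le_one (N + 2)
  calc _ ≤ ∑ m ∈ range (N + 2), (if m = 1 then u else 1) / m ! :=
        sum_le_sum_of_subset_of_nonneg (range_subset_range.2 (by omega))
          fun m _ _ => by positivity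
    _ ≤ _ := by
        simp only [sum_range_succ', one_pow] at hexp ⊢
        norm_num at hexp ⊢
        linarith

lemma card_few_unique_mul_rpow_le {α ι : Type*} [Fintype α] [DecidableEq α] [Fintype ι]
    [DecidableEq ι] {u : ℝ} (hu₀ : 0 < u) (hu₁ : u ≤ 1) (t : ℝ) :
    #{x : α → ι | (Nat.card {j // ∃! i, x i = j} : ℝ) < t} * u ^ t ≤
      (Fintype.card α)! * (Real.exp 1 - 1 + u) ^ Fintype.card ι := by
  have hw : ∀ m : ℕ, 0 ≤ if m = 1 then u else 1 := fun m => by split_ifs <;> positivity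
  have hmarkov :=
    card_filter_lt_mul_rpow_le (fun x : α → ι => Nat.card {j // ∃! i, x i = j}) hu₀ hu₁ t
  have hmoment := sum_prod_fiberCard_le (α := α) (ι := ι) _ hw
  simp only [← pow_card_existsUnique_eq_prod] at hmoment
  refine hmarkov.trans (hmoment.trans ?_)
  gcongr
  exact sum_range_ite_one_div_factorial_le _ hu₀.le

lemma factorial_le_exp_one_mul_sqrt_mul_pow {N : ℕ} (hN : N ≠ 0) :
    (N ! : ℝ) ≤ Real.exp 1 * √N * (N / Real.exp 1) ^ N := by
  obtain ⟨k, rfl⟩ := Nat.exists_eq_succ_of_ne_zero hN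
  have h : Stirling.stirlingSeq (k + 1) ≤ Stirling.stirlingSeq 1 :=
    Stirling.stirlingSeq'_antitone (Nat.zero_le k)
  rw [Stirling.stirlingSeq_one, Stirling.stirlingSeq, div_le_iff₀ (by positivity),
    Real.sqrt_mul zero_le_two] at h
  refine h.trans_eq ?_
  field_simp

lemma card_few_unique_le {α : Type*} [Fintype α] [Nonempty α] :
    (Nat.card {x : α → α // (Nat.card {j // ∃! i, x i = j} : ℝ) < Fintype.card α / 8} : ℝ) ≤
      Real.exp 1 * √(Fintype.card α) * (3 / 4 * 2 ^ (1 / 4 : ℝ)) ^ Fintype.card α *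
        Fintype.card α ^ Fintype.card α := by
  classical
  set N := Fintype.card α
  rw [Nat.card_eq_fintype_card, Fintype.card_subtype]
  have hmoment := card_few_unique_mul_rpow_le (α := α) (ι := α) (u := 1 / 4) (by norm_num)
    (by norm_num) (N / 8)
  have hfact := factorial_le_exp_one_mul_sqrt_mul_pow (Fintype.card_ne_zero (α := α))
  have he : Real.exp 1 - 1 + 1 / 4 ≤ 3 / 4 * Real.exp 1 := by linarith [Real.exp_one_lt_three]
  have he₀ : 0 ≤ Real.exp 1 - 1 + 1 / 4 := by linarith [Real.add_one_le_exp 1]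
  have hcancel : (1 / 4 : ℝ) ^ ((N : ℝ) / 8) * (2 ^ (1 / 4 : ℝ)) ^ N = 1 := by
    rw [← Real.rpow_natCast, ← Real.rpow_mul zero_le_two,
      show (1 / 4 : ℝ) = 2 ^ (-2 : ℝ) by norm_num, ← Real.rpow_mul zero_le_two,
      ← Real.rpow_add two_pos]
    ring_nf
    exact Real.rpow_zero 2
  calc _ = #{x : α → α | (Nat.card {j // ∃! i, x i = j} : ℝ) < N / 8} *
        (1 / 4 : ℝ) ^ ((N : ℝ) / 8) * (2 ^ (1 / 4 : ℝ)) ^ N := by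
        rw [mul_assoc, hcancel, mul_one]
    _ ≤ N ! * (Real.exp 1 - 1 + 1 / 4) ^ N * (2 ^ (1 / 4 : ℝ)) ^ N := by gcongr
    _ ≤ Real.exp 1 * √N * (N / Real.exp 1) ^ N * (3 / 4 * Real.exp 1) ^ N *
        (2 ^ (1 / 4 : ℝ)) ^ N := by gcongr
    _ = _ := by
        rw [div_pow, mul_pow, mul_pow]
        field_simp

lemma eventually_exp_one_mul_sqrt_mul_pow_le :
    ∀ᶠ N : ℕ in atTop,
      Real.exp 1 * √N * (3 / 4 * 2 ^ (1 / 4 : ℝ)) ^ N ≤ 2 ^ (-(1 / 8 * (N : ℝ))) := by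
  set r : ℝ := 3 / 4 * 2 ^ (3 / 8 : ℝ)
  have hr : r < 1 := by
    refine (pow_lt_one_iff_of_nonneg (by positivity) (n := 8) (by norm_num)).1 ?_
    rw [mul_pow, ← Real.rpow_natCast (2 ^ (3 / 8 : ℝ)), ← Real.rpow_mul zero_le_two]
    norm_num
  have hlim := (tendsto_self_mul_const_pow_of_lt_one (by positivity) hr).const_mul (Real.exp 1)
  rw [mul_zero] at hlim
  filter_upwards [hlim.eventually (ge_mem_nhds one_pos), eventually_ge_atTop 1] with N hN hN₁
  have hsplit : (3 / 4 * 2 ^ (1 / 4 : ℝ)) ^ N = r ^ N * 2 ^ (-(1 / 8 * (N : ℝ))) := by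
    simp only [r, mul_pow, ← Real.rpow_natCast, ← Real.rpow_mul zero_le_two, mul_assoc,
      ← Real.rpow_add two_pos]
    ring_nf
  rw [hsplit, ← mul_assoc]
  refine mul_le_of_le_one_left (by positivity) (le_trans ?_ hN)
  rw [mul_assoc]
  gcongr
  exact Real.sqrt_le_self_iff.2 (Or.inr (by exact_mod_cast hN₁))

lemma card_few_unique_lt_card_pow {α : Type*} [Fintype α] {t : ℝ} (ht : t ≤ Fintype.card α) :
    Nat.card {x : α → α // (Nat.card {j // ∃! i, x i = j} : ℝ) < t} <
      Fintype.card α ^ Fintype.card α := by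
  classical
  have hid : Nat.card {j : α // ∃! i, id i = j} = Fintype.card α := by
    rw [Nat.card_congr (Equiv.subtypeUnivEquiv fun j => ⟨j, rfl, fun _ => id⟩),
      Nat.card_eq_fintype_card]
  rw [Nat.card_eq_fintype_card, ← Fintype.card_fun]
  exact Fintype.card_subtype_lt (x := id) (by rw [hid]; exact ht.not_gt)

lemma exists_pos_le_two_rpow_neg_mul {k M : ℝ} (h : k < M) (a : ℝ) :
    ∃ c > 0, k ≤ 2 ^ (-(c * a)) * M := by
  have hcont : Tendsto (fun c : ℝ => (2 : ℝ) ^ (-(c * a)) * M) (𝓝[>] 0) (𝓝 M) := by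
    have : Continuous fun c : ℝ => (2 : ℝ) ^ (-(c * a)) * M := by fun_prop (disch := norm_num)
    simpa using (this.tendsto 0).mono_left nhdsWithin_le_nhds
  obtain ⟨c, hk, hc⟩ := ((hcont.eventually (lt_mem_nhds h)).and self_mem_nhdsWithin).exists
  exact ⟨c, hc, hk.le⟩

lemma exists_pos_forall_of_eventually {P : ℕ → ℝ → Prop}
    (hanti : ∀ n ⦃c c'⦄, c' ≤ c → P n c → P n c')
    (hpos : ∀ n, ∃ c > 0, P n c) {c₀ : ℝ} (hc₀ : 0 < c₀) (hev : ∀ᶠ n in atTop, P n c₀) :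
    ∃ c > 0, ∀ n, P n c := by
  obtain ⟨n₀, hn₀⟩ := eventually_atTop.1 hev
  clear hev
  induction n₀ generalizing c₀ with
  | zero => exact ⟨c₀, hc₀, fun n => hn₀ n n.zero_le⟩
  | succ k ih =>
    obtain ⟨c₁, hc₁, hk⟩ := hpos k
    refine ih (lt_min hc₀ hc₁) fun n hn => ?_
    rcases hn.eq_or_lt with rfl | hlt
    · exact hanti _ (min_le_right _ _) hk
    · exact hanti _ (min_le_left _ _) (hn₀ n hlt)

/-- There is a constant `c > 0` such that for all `n ≥ 1`, the number of
functions `x : (ZMod 2)^n → (ZMod 2)^n` for which fewer than `2^n/8` values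
have exactly one preimage is at most `2^(-c·2^n) · (2^n)^(2^n)`. -/
theorem few_unique_preimages_rare :
    ∃ c > (0 : ℝ), ∀ n : ℕ, 1 ≤ n →
      (Nat.card {x : (Fin n → ZMod 2) → (Fin n → ZMod 2) //
          (Nat.card {j : Fin n → ZMod 2 // ∃! i, x i = j} : ℝ)
            < (2 : ℝ) ^ n / 8} : ℝ)
        ≤ (2 : ℝ) ^ (-(c * 2 ^ n)) * ((2 ^ n) ^ 2 ^ n : ℕ) := by
  have hcard (n : ℕ) : Fintype.card (Fin n → ZMod 2) = 2 ^ n := by simp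
  refine exists_pos_forall_of_eventually (c₀ := 1 / 8) (fun n c c' hc' h hn => ?_)
    (fun n => ?_) (by norm_num) ?_
  · exact (h hn).trans (by gcongr; norm_num)
  · have hlt := card_few_unique_lt_card_pow (α := Fin n → ZMod 2) (t := (2 : ℝ) ^ n / 8)
      (by rw [hcard]; push_cast; exact div_le_self (by positivity) (by norm_num))
    rw [hcard] at hlt
    obtain ⟨c, hc, h⟩ := exists_pos_le_two_rpow_neg_mul (Nat.cast_lt.2 hlt) (2 ^ n)
    exact ⟨c, hc, fun _ => h⟩
  · filter_upwards [(tendsto_pow_atTop_atTop_of_one_lt one_lt_two).eventually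
      eventually_exp_one_mul_sqrt_mul_pow_le] with n hn _
    have h := card_few_unique_le (α := Fin n → ZMod 2)
    rw [hcard] at h
    push_cast at h hn ⊢
    exact h.trans (by gcongr)
end
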